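/- There exist a three-node cycle configuration (balanced injections and line flow limits) for which the feasible set {β ∈ ℝ³_{>0} : |p_{ab}(β)| ≤ f_{ab} for all three lines} is not convex. -/
import Mathlib


/-- Common denominator `D(β) = β₁₂β₁₃ + β₁₂β₂₃ + β₁₃β₂₃`. -/
noncomputable def denom (β : ℝ × ℝ × ℝ) : ℝ :=
  β.1 * β.2.1 + β.1 * β.2.2 + β.2.1 * β.2.2

/-- DC flow on line (1,2) of the three-node cycle (injections `p₁, p₂`,
`p₃ = -(p₁+p₂)`). -/
noncomputable def flow12 (p1 p2 : ℝ) (β : ℝ × ℝ × ℝ) : ℝ :=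
  β.1 * (p1 * β.2.2 - p2 * β.2.1) / denom β

/-- DC flow on line (1,3) of the three-node cycle. -/
noncomputable def flow13 (p1 p2 : ℝ) (β : ℝ × ℝ × ℝ) : ℝ :=
  β.2.1 * (p1 * β.2.2 - (-(p1 + p2)) * β.1) / denom β

/-- DC flow on line (2,3) of the three-node cycle. -/
noncomputable def flow23 (p1 p2 : ℝ) (β : ℝ × ℝ × ℝ) : ℝ :=
  β.2.2 * (p2 * β.2.1 - (-(p1 + p2)) * β.1) / denom β

/-- There exists a three-node cycle configuration (balanced injections and
positive line flow limits) for which the feasible set of susceptances is not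
convex. -/
theorem three_node_feasible_set_not_convex :
    ∃ (p1 p2 f12 f13 f23 : ℝ), 0 < f12 ∧ 0 < f13 ∧ 0 < f23 ∧
      ¬ Convex ℝ {β : ℝ × ℝ × ℝ |
          (0 < β.1 ∧ 0 < β.2.1 ∧ 0 < β.2.2) ∧
          |flow12 p1 p2 β| ≤ f12 ∧ |flow13 p1 p2 β| ≤ f13 ∧
          |flow23 p1 p2 β| ≤ f23} := by
  refine ⟨1, 0, 1/10, 1, 1/10, by norm_num, by norm_num, by norm_num, fun h => ?_⟩
  have hx : ((1:ℝ), (1:ℝ), (1/10:ℝ)) ∈ {β : ℝ × ℝ × ℝ |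
      (0 < β.1 ∧ 0 < β.2.1 ∧ 0 < β.2.2) ∧
      |flow12 1 0 β| ≤ 1/10 ∧ |flow13 1 0 β| ≤ 1 ∧ |flow23 1 0 β| ≤ 1/10} := by
    refine ⟨⟨by norm_num, by norm_num, by norm_num⟩, ?_, ?_, ?_⟩ <;>
      rw [abs_le] <;> norm_num [flow12, flow13, flow23, denom]
  have hy : ((1/10:ℝ), (1:ℝ), (1:ℝ)) ∈ {β : ℝ × ℝ × ℝ |
      (0 < β.1 ∧ 0 < β.2.1 ∧ 0 < β.2.2) ∧
      |flow12 1 0 β| ≤ 1/10 ∧ |flow13 1 0 β| ≤ 1 ∧ |flow23 1 0 β| ≤ 1/10} := by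
    refine ⟨⟨by norm_num, by norm_num, by norm_num⟩, ?_, ?_, ?_⟩ <;>
      rw [abs_le] <;> norm_num [flow12, flow13, flow23, denom]
  have hmid := h hx hy (by norm_num : (0:ℝ) ≤ 1/2) (by norm_num : (0:ℝ) ≤ 1/2)
    (by norm_num : (1/2:ℝ) + 1/2 = 1)
  have heq : (1/2 : ℝ) • ((1:ℝ), (1:ℝ), (1/10:ℝ)) + (1/2 : ℝ) • ((1/10:ℝ), (1:ℝ), (1:ℝ))
      = ((11/20:ℝ), (1:ℝ), (11/20:ℝ)) := by
    simp [Prod.ext_iff]; norm_num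
  rw [heq] at hmid
  have h12 := hmid.2.1
  rw [abs_le] at h12
  have : flow12 1 0 ((11/20:ℝ), (1:ℝ), (11/20:ℝ)) = 11/51 := by
    norm_num [flow12, denom]
  rw [this] at h12
  linarith [h12.2]
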